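/- Let α ∈ (0,1), m > 0 with K := 2·m^{1−1/α}, let d, d_w > 0, d_J > 1, L > 1, and let c_1, c_2, c_3, c_4, c_6, C_η, A_5, A_6, A_7, A_8 > 0 be constants. For c > 0, t > 0, ρ > 0 and measurable η : (0,∞) → [0,∞), set Φ_c(t,ρ) := e^{mt}·∫_0^∞ f_c(s,ρ)·e^{−m^{1/α} s}·η(s) ds. Then there exist a nonnegative integer M_0 and constants C_7, C_8, C_9, C_10 > 0 depending only on the listed constants such that: for every integer M ≥ M_0, every t ∈ (0,1), every r with 1 ≤ r ≤ L^M, and all measurable η, G : (0,∞) → [0,∞) satisfying (i) η(u) ≤ C_η·t·u^{−1−α} for all u > 0; (ii) c_1·f_{c_2}(s,r) ≤ G(s) for all s > 0, G(s) ≤ c_3·f_{c_4}(s,r) for 0 < s < K·L^{M d_w}, and G(s) ≤ c_6·L^{−Md} for s ≥ K·L^{M d_w}; (iii) A_5·t·e^{−A_6·r^{d_w/d_J}} ≤ Φ_{c_2}(t,r) and Φ_{c_4}(t,r) ≤ A_7·t·e^{−A_8·r^{d_w/d_J}}; one has C_7·t·e^{−C_8·r^{d_w/d_J}} ≤ e^{mt}·∫_0^∞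 G(s)·e^{−m^{1/α} s}·η(s) ds ≤ C_9·t·e^{−C_10·r^{d_w/d_J}}. -/

import Mathlib

/-!
The lower bound is pointwise: `G ≥ c₁ f_{c₂}` gives `c₁ Φ_{c₂}`. For the upper bound split the
integral at `S = K L^{M d_w}`. Below `S`, `G ≤ c₃ f_{c₄}` gives `c₃ Φ_{c₄}`. Above `S`, `G ≤ c₆`,
`η(s) ≤ C_η t s^{-1-α}` and
`e^{-m^{1/α} s} ≤ e^{-m^{1/α} S} = e^{-2m L^{M d_w}} ≤ e^{-2m r^{d_w/d_J}}`
give a tail of order `t e^{-2m r^{d_w/d_J}}`, uniformly in `M` since `S ≥ K`.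
-/

open MeasureTheory Set

/-- The subgaussian profile `f_c(t,r) = t^{-d/d_w} exp(-c (r / t^{1/d_w})^{d_w/(d_J-1)})`. -/
noncomputable def fprof (d dw dJ c t r : ℝ) : ℝ :=
  t ^ (-(d / dw)) * Real.exp (-c * (r / t ^ (1 / dw)) ^ (dw / (dJ - 1)))

/-- The relativistic subordination of the subgaussian profile:
`Φ_c(t,ρ) = e^{mt} ∫_0^∞ f_c(s,ρ) e^{-m^{1/α} s} η(s) ds`. -/
noncomputable def Phi (d dw dJ α m : ℝ) (η : ℝ → ℝ) (c t ρ : ℝ) : ℝ :=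
  Real.exp (m * t) *
    ∫ s in Ioi (0 : ℝ), fprof d dw dJ c s ρ * Real.exp (-(m ^ (1 / α)) * s) * η s

open Real Nat

lemma exp_neg_le_factorial_div_pow {y : ℝ} (hy : 0 < y) (n : ℕ) : exp (-y) ≤ n ! / y ^ n := by
  rw [exp_neg, inv_le_comm₀ (exp_pos y) (by positivity), inv_div]
  exact pow_div_factorial_le_exp y hy.le n

/-- `exp (-c s^{-q}) ≤ n! c^{-n} s^{nq}` removes the singularity at `0`, leaving a Gamma-type
integrand. -/
theorem integrableOn_rpow_mul_exp_neg_rpow_mul_exp_neg (a : ℝ) {c q b : ℝ} (hc : 0 < c)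
    (hq : 0 < q) (hb : 0 < b) :
    IntegrableOn (fun s : ℝ => s ^ a * exp (-(c * s ^ (-q))) * exp (-b * s)) (Ioi 0) := by
  obtain ⟨n, hn⟩ := exists_nat_gt ((-1 - a) / q)
  have hexp : -1 < a + n * q := by rw [div_lt_iff₀ hq] at hn; linarith
  refine ((integrableOn_rpow_mul_exp_neg_mul_rpow hexp one_pos hb).const_mul (n ! / c ^ n)).mono'
    (by fun_prop) ?_
  filter_upwards [ae_restrict_mem measurableSet_Ioi] with s (hs : 0 < s)
  rw [norm_of_nonneg (by positivity)]
  calc s ^ a * exp (-(c * s ^ (-q))) * exp (-b * s)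
      ≤ s ^ a * (n ! / (c * s ^ (-q)) ^ n) * exp (-b * s) := by
        gcongr; exact exp_neg_le_factorial_div_pow (by positivity) n
    _ = n ! / c ^ n * (s ^ (a + n * q) * exp (-b * s ^ (1 : ℝ))) := by
        rw [rpow_one, rpow_add hs, mul_pow, rpow_neg hs.le, inv_pow, ← rpow_natCast (s ^ q),
          ← rpow_mul hs.le, mul_comm q]
        field_simp

lemma fprof_nonneg (d dw dJ c : ℝ) {s : ℝ} (hs : 0 ≤ s) (r : ℝ) : 0 ≤ fprof d dw dJ c s r := by
  unfold fprof; positivity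

lemma fprof_eq {dw : ℝ} (hdw : dw ≠ 0) (d dJ c : ℝ) {s r : ℝ} (hs : 0 < s) (hr : 0 ≤ r) :
    fprof d dw dJ c s r =
      s ^ (-(d / dw)) * exp (-(c * r ^ (dw / (dJ - 1)) * s ^ (-(1 / (dJ - 1))))) := by
  rw [fprof, div_rpow hr (by positivity), ← rpow_mul hs.le,
    show 1 / dw * (dw / (dJ - 1)) = 1 / (dJ - 1) by field_simp, div_eq_mul_inv _ (s ^ _),
    ← rpow_neg hs.le, neg_mul, mul_assoc]

theorem integrableOn_fprof_mul_exp_mul {d dw dJ c r b α C : ℝ} {η : ℝ → ℝ} (hdw : 0 < dw)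
    (hdJ : 1 < dJ) (hc : 0 < c) (hr : 0 < r) (hb : 0 < b) (hη : Measurable η)
    (hη0 : ∀ u, 0 < u → 0 ≤ η u) (hηC : ∀ u, 0 < u → η u ≤ C * u ^ (-1 - α)) :
    IntegrableOn (fun s => fprof d dw dJ c s r * exp (-b * s) * η s) (Ioi 0) := by
  have hdom := (integrableOn_rpow_mul_exp_neg_rpow_mul_exp_neg (-(d / dw) + (-1 - α))
    (c := c * r ^ (dw / (dJ - 1))) (by positivity) (q := 1 / (dJ - 1))
    (one_div_pos.2 (sub_pos.2 hdJ)) hb).const_mul C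
  refine hdom.mono' (by unfold fprof; fun_prop) ?_
  filter_upwards [ae_restrict_mem measurableSet_Ioi] with s (hs : 0 < s)
  have hf := fprof_nonneg d dw dJ c hs.le r
  rw [norm_of_nonneg (mul_nonneg (by positivity) (hη0 s hs))]
  calc fprof d dw dJ c s r * exp (-b * s) * η s
      ≤ fprof d dw dJ c s r * exp (-b * s) * (C * s ^ (-1 - α)) := by gcongr; exact hηC s hs
    _ = _ := by rw [fprof_eq hdw.ne' d dJ c hs hr.le, rpow_add hs]; ring

lemma mul_exp_mul_le_of_le {b S s x y B Y : ℝ} (hb : 0 ≤ b) (hSs : S ≤ s) (hx : 0 ≤ x)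
    (hxB : x ≤ B) (hy : 0 ≤ y) (hyY : y ≤ Y) :
    x * exp (-b * s) * y ≤ B * exp (-b * S) * Y := by
  have hexp : exp (-b * s) ≤ exp (-b * S) := exp_le_exp.2 (by nlinarith)
  exact mul_le_mul (mul_le_mul hxB hexp (exp_pos _).le (hx.trans hxB)) hyY hy
    (mul_nonneg (hx.trans hxB) (exp_pos _).le)

section WeightedIntegral

variable {G g η : ℝ → ℝ} {b c C α S B : ℝ}

lemma mul_exp_mul_nonneg (hG0 : ∀ s, 0 < s → 0 ≤ G s) (hη0 : ∀ u, 0 < u → 0 ≤ η u) {s : ℝ}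
    (hs : 0 < s) : 0 ≤ G s * exp (-b * s) * η s :=
  mul_nonneg (mul_nonneg (hG0 s hs) (exp_pos _).le) (hη0 s hs)

lemma mul_exp_mul_le_mul_exp_mul (hη0 : ∀ u, 0 < u → 0 ≤ η u) {s x y : ℝ} (hs : 0 < s)
    (hxy : x ≤ y) : x * exp (-b * s) * η s ≤ y * exp (-b * s) * η s :=
  mul_le_mul_of_nonneg_right (mul_le_mul_of_nonneg_right hxy (exp_pos _).le) (hη0 s hs)

theorem integrableOn_mul_exp_mul_of_le (hα : 0 < α) (hS : 0 < S) (hb : 0 ≤ b)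
    (hG : Measurable G) (hη : Measurable η) (hG0 : ∀ s, 0 < s → 0 ≤ G s)
    (hη0 : ∀ u, 0 < u → 0 ≤ η u) (hηC : ∀ u, 0 < u → η u ≤ C * u ^ (-1 - α))
    (hGg : ∀ s, 0 < s → s < S → G s ≤ c * g s) (hGB : ∀ s, S ≤ s → G s ≤ B)
    (hg : IntegrableOn (fun s => g s * exp (-b * s) * η s) (Ioi 0)) :
    IntegrableOn (fun s => G s * exp (-b * s) * η s) (Ioi 0) := by
  have hmeas : AEStronglyMeasurable (fun s => G s * exp (-b * s) * η s) := by fun_prop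
  rw [← Ioo_union_Ici_eq_Ioi hS]
  refine IntegrableOn.union
    (((hg.mono_set Ioo_subset_Ioi_self).const_mul c).mono' hmeas.restrict ?_) ?_
  · filter_upwards [ae_restrict_mem measurableSet_Ioo] with s ⟨hs, hsS⟩
    rw [norm_of_nonneg (mul_exp_mul_nonneg hG0 hη0 hs)]
    exact (mul_exp_mul_le_mul_exp_mul hη0 hs (hGg s hs hsS)).trans_eq (by ring)
  · rw [integrableOn_Ici_iff_integrableOn_Ioi]
    refine (((integrableOn_Ioi_rpow_of_lt (by linarith : -1 - α < -1) hS).const_mul C).const_mul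
      (B * exp (-b * S))).mono' hmeas.restrict ?_
    filter_upwards [ae_restrict_mem measurableSet_Ioi] with s (hSs : S < s)
    have hs : 0 < s := hS.trans hSs
    rw [norm_of_nonneg (mul_exp_mul_nonneg hG0 hη0 hs)]
    exact mul_exp_mul_le_of_le hb hSs.le (hG0 s hs) (hGB s hSs.le) (hη0 s hs) (hηC s hs)

theorem setIntegral_Ici_mul_exp_mul_le (hα : 0 < α) (hS : 0 < S) (hb : 0 ≤ b)
    (hG0 : ∀ s, 0 < s → 0 ≤ G s) (hη0 : ∀ u, 0 < u → 0 ≤ η u)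
    (hηC : ∀ u, 0 < u → η u ≤ C * u ^ (-1 - α)) (hGB : ∀ s, S ≤ s → G s ≤ B) :
    ∫ s in Ici S, G s * exp (-b * s) * η s ≤ B * exp (-b * S) * (C * (S ^ (-α) / α)) := by
  have hdom : IntegrableOn (fun s => B * exp (-b * S) * (C * s ^ (-1 - α))) (Ici S) := by
    rw [integrableOn_Ici_iff_integrableOn_Ioi]
    exact ((integrableOn_Ioi_rpow_of_lt (by linarith) hS).const_mul C).const_mul _
  calc ∫ s in Ici S, G s * exp (-b * s) * η s
      ≤ ∫ s in Ici S, B * exp (-b * S) * (C * s ^ (-1 - α)) := by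
        refine setIntegral_mono_of_nonneg
          (fun s hSs => mul_exp_mul_nonneg hG0 hη0 (hS.trans_le hSs))
          (fun s (hSs : S ≤ s) => ?_) hdom
        have hs := hS.trans_le hSs
        exact mul_exp_mul_le_of_le hb hSs (hG0 s hs) (hGB s hSs) (hη0 s hs) (hηC s hs)
    _ = B * exp (-b * S) * (C * (S ^ (-α) / α)) := by
        rw [integral_const_mul, integral_const_mul, integral_Ici_eq_integral_Ioi,
          integral_Ioi_rpow_of_lt (by linarith) hS, show -1 - α + 1 = -α by ring, neg_div_neg_eq]

theorem integral_mul_exp_mul_le_of_le (hα : 0 < α) (hS : 0 < S) (hb : 0 ≤ b) (hc : 0 ≤ c)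
    (hG0 : ∀ s, 0 < s → 0 ≤ G s) (hg0 : ∀ s, 0 < s → 0 ≤ g s) (hη0 : ∀ u, 0 < u → 0 ≤ η u)
    (hηC : ∀ u, 0 < u → η u ≤ C * u ^ (-1 - α))
    (hGg : ∀ s, 0 < s → s < S → G s ≤ c * g s) (hGB : ∀ s, S ≤ s → G s ≤ B)
    (hg : IntegrableOn (fun s => g s * exp (-b * s) * η s) (Ioi 0))
    (hF : IntegrableOn (fun s => G s * exp (-b * s) * η s) (Ioi 0)) :
    ∫ s in Ioi 0, G s * exp (-b * s) * η s ≤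
      c * (∫ s in Ioi 0, g s * exp (-b * s) * η s) + B * exp (-b * S) * (C * (S ^ (-α) / α)) := by
  have hdisj : Disjoint (Ioo 0 S) (Ici S) :=
    (Iio_disjoint_Ici le_rfl).mono_left Ioo_subset_Iio_self
  rw [← Ioo_union_Ici_eq_Ioi hS, setIntegral_union hdisj measurableSet_Ici
    (hF.mono_set Ioo_subset_Ioi_self) (hF.mono_set (Ici_subset_Ioi.2 hS)), ← integral_const_mul]
  refine add_le_add ?_ (setIntegral_Ici_mul_exp_mul_le hα hS hb hG0 hη0 hηC hGB)
  calc ∫ s in Ioo 0 S, G s * exp (-b * s) * η s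
      ≤ ∫ s in Ioo 0 S, c * (g s * exp (-b * s) * η s) :=
        setIntegral_mono_of_nonneg (fun s ⟨hs, _⟩ => mul_exp_mul_nonneg hG0 hη0 hs)
          (fun s ⟨hs, hsS⟩ => (mul_exp_mul_le_mul_exp_mul hη0 hs (hGg s hs hsS)).trans_eq
            (by ring))
          ((hg.mono_set Ioo_subset_Ioi_self).const_mul c)
    _ ≤ ∫ s in Ioo 0 S ∪ Ici S, c * (g s * exp (-b * s) * η s) := by
        rw [Ioo_union_Ici_eq_Ioi hS]
        refine setIntegral_mono_set (hg.const_mul c) ?_ Ioo_subset_Ioi_self.eventuallyLE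
        filter_upwards [ae_restrict_mem measurableSet_Ioi] with s (hs : 0 < s)
        exact mul_nonneg hc (mul_exp_mul_nonneg hg0 hη0 hs)

theorem mul_integral_mul_exp_mul_le_of_le (hc : 0 ≤ c) (hg0 : ∀ s, 0 < s → 0 ≤ g s)
    (hη0 : ∀ u, 0 < u → 0 ≤ η u) (hgG : ∀ s, 0 < s → c * g s ≤ G s)
    (hF : IntegrableOn (fun s => G s * exp (-b * s) * η s) (Ioi 0)) :
    c * ∫ s in Ioi 0, g s * exp (-b * s) * η s ≤ ∫ s in Ioi 0, G s * exp (-b * s) * η s := by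
  rw [← integral_const_mul]
  refine setIntegral_mono_of_nonneg (fun s (hs : 0 < s) => ?_) (fun s (hs : 0 < s) => ?_) hF
  · exact mul_nonneg hc (mul_exp_mul_nonneg hg0 hη0 hs)
  · exact (mul_exp_mul_le_mul_exp_mul hη0 hs (hgG s hs)).trans_eq' (by ring)

end WeightedIntegral

lemma exp_mul_mul_exp_neg_mul_le {m t α b K S B C ρ : ℝ} (hα : 0 < α) (hm : 0 ≤ m) (ht : t ≤ 1)
    (hK : 0 < K) (hKS : K ≤ S) (hB : 0 ≤ B) (hC : 0 ≤ C) (hρ : 2 * m * ρ ≤ b * S) :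
    exp (m * t) * (B * exp (-b * S) * (C * (S ^ (-α) / α))) ≤
      exp m * B * C * K ^ (-α) / α * exp (-(2 * m) * ρ) := by
  have h1 : exp (m * t) ≤ exp m := exp_le_exp.2 (mul_le_of_le_one_right hm ht)
  have h2 : exp (-b * S) ≤ exp (-(2 * m) * ρ) := exp_le_exp.2 (by linarith)
  have h3 : S ^ (-α) ≤ K ^ (-α) := rpow_le_rpow_of_nonpos hK hKS (by linarith)
  have hSα : 0 ≤ S ^ (-α) / α := div_nonneg (rpow_nonneg (hK.le.trans hKS) _) hα.le
  calc _ ≤ exp m * (B * exp (-(2 * m) * ρ) * (C * (K ^ (-α) / α))) := by gcongr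
    _ = _ := by ring

lemma add_mul_exp_neg_mul_le {a b A B x : ℝ} (ha : 0 ≤ a) (hb : 0 ≤ b) (hx : 0 ≤ x) :
    a * exp (-A * x) + b * exp (-B * x) ≤ (a + b) * exp (-min A B * x) := by
  have hA : exp (-A * x) ≤ exp (-min A B * x) := by gcongr; exact min_le_left A B
  have hB : exp (-B * x) ≤ exp (-min A B * x) := by gcongr; exact min_le_right A B
  nlinarith

lemma rpow_div_le_rpow_mul {r L x p q : ℝ} (hr : 0 ≤ r) (hL : 1 ≤ L) (hx : 0 ≤ x) (hp : 0 ≤ p)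
    (hq : 1 ≤ q) (hrL : r ≤ L ^ x) : r ^ (p / q) ≤ L ^ (x * p) :=
  calc r ^ (p / q) ≤ (L ^ x) ^ (p / q) := by gcongr
    _ = L ^ (x * (p / q)) := (rpow_mul (by linarith) _ _).symm
    _ ≤ L ^ (x * p) :=
        rpow_le_rpow_of_exponent_le hL (mul_le_mul_of_nonneg_left (div_le_self hp hq) hx)

theorem stmt13_general (α m K d dw dJ L c1 c2 c3 c4 c6 Cη A5 A6 A7 A8 : ℝ)
    (hα0 : 0 < α) (hm : 0 < m)
    (hK : K = 2 * m ^ (1 - 1 / α))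
    (hd : 0 < d) (hdw : 0 < dw) (hdJ : 1 < dJ) (hL : 1 < L)
    (hc1 : 0 < c1) (hc3 : 0 < c3) (hc4 : 0 < c4) (hc6 : 0 < c6)
    (hCη : 0 < Cη) (hA5 : 0 < A5) (hA6 : 0 < A6) (hA7 : 0 < A7) (hA8 : 0 < A8) :
    ∃ M0 : ℕ, ∃ C7 C8 C9 C10 : ℝ, 0 < C7 ∧ 0 < C8 ∧ 0 < C9 ∧ 0 < C10 ∧
      ∀ M : ℕ, M0 ≤ M →
      ∀ t : ℝ, 0 < t → t < 1 →
      ∀ r : ℝ, 1 ≤ r → r ≤ L ^ (M : ℝ) →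
      ∀ η G : ℝ → ℝ, Measurable η → Measurable G →
        (∀ u, 0 < u → 0 ≤ η u) → (∀ s, 0 < s → 0 ≤ G s) →
        (∀ u, 0 < u → η u ≤ Cη * t * u ^ (-1 - α)) →
        (∀ s, 0 < s → c1 * fprof d dw dJ c2 s r ≤ G s) →
        (∀ s, 0 < s → s < K * L ^ ((M : ℝ) * dw) → G s ≤ c3 * fprof d dw dJ c4 s r) →
        (∀ s, K * L ^ ((M : ℝ) * dw) ≤ s → G s ≤ c6 * L ^ (-((M : ℝ) * d))) →
        (A5 * t * Real.exp (-A6 * r ^ (dw / dJ)) ≤ Phi d dw dJ α m η c2 t r) →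
        (Phi d dw dJ α m η c4 t r ≤ A7 * t * Real.exp (-A8 * r ^ (dw / dJ))) →
        C7 * t * Real.exp (-C8 * r ^ (dw / dJ)) ≤
            Real.exp (m * t) *
              (∫ s in Ioi (0 : ℝ), G s * Real.exp (-(m ^ (1 / α)) * s) * η s) ∧
          Real.exp (m * t) *
              (∫ s in Ioi (0 : ℝ), G s * Real.exp (-(m ^ (1 / α)) * s) * η s) ≤
            C9 * t * Real.exp (-C10 * r ^ (dw / dJ)) := by
  have hK0 : 0 < K := by rw [hK]; positivity
  refine ⟨0, c1 * A5, A6, c3 * A7 + exp m * c6 * Cη * K ^ (-α) / α, min A8 (2 * m),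
    by positivity, hA6, by positivity, lt_min hA8 (by positivity), ?_⟩
  intro M _ t ht0 ht1 r hr1 hrL η G hη hG hη0 hG0 hηC hGlow hGnear hGfar hΦlow hΦup
  rw [Phi] at hΦlow hΦup
  set b := m ^ (1 / α)
  set S := K * L ^ ((M : ℝ) * dw)
  set ρ := r ^ (dw / dJ)
  have hLM : 1 ≤ L ^ ((M : ℝ) * dw) := one_le_rpow hL.le (by positivity)
  have hρS : 2 * m * ρ ≤ b * S := by
    have hbK : b * K = 2 * m := by rw [hK, mul_left_comm, ← rpow_add hm]; norm_num
    calc 2 * m * ρ ≤ 2 * m * L ^ ((M : ℝ) * dw) := by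
          gcongr; exact rpow_div_le_rpow_mul (by linarith) hL.le (by positivity) hdw.le hdJ.le hrL
      _ = b * S := by rw [← hbK]; ring
  have hLd : L ^ (-((M : ℝ) * d)) ≤ 1 :=
    rpow_le_one_of_one_le_of_nonpos hL.le (neg_nonpos.2 (by positivity))
  have hGfar' : ∀ s, S ≤ s → G s ≤ c6 := fun s hs =>
    (hGfar s hs).trans (mul_le_of_le_one_right hc6.le hLd)
  have hf4 := integrableOn_fprof_mul_exp_mul (d := d) (r := r) (b := b) hdw hdJ hc4
    (by linarith) (by positivity) hη hη0 hηC
  have hF := integrableOn_mul_exp_mul_of_le hα0 (by positivity) (by positivity) hG hη hG0 hη0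
    hηC hGnear hGfar' hf4
  have hsplit := integral_mul_exp_mul_le_of_le hα0 (by positivity) (by positivity) hc3.le hG0
    (fun s hs => fprof_nonneg d dw dJ c4 hs.le r) hη0 hηC hGnear hGfar' hf4 hF
  have htail := exp_mul_mul_exp_neg_mul_le (S := S) hα0 hm.le ht1.le hK0
    (le_mul_of_one_le_right hK0.le hLM) hc6.le (by positivity : 0 ≤ Cη * t) hρS
  have hlow := mul_integral_mul_exp_mul_le_of_le hc1.le
    (fun s hs => fprof_nonneg d dw dJ c2 hs.le r) hη0 hGlow hF
  constructor
  · linear_combination mul_le_mul_of_nonneg_left hΦlow hc1.le +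
      mul_le_mul_of_nonneg_left hlow (exp_pos (m * t)).le
  · calc exp (m * t) * ∫ s in Ioi 0, G s * exp (-b * s) * η s
        ≤ c3 * A7 * t * exp (-A8 * ρ) + exp m * c6 * Cη * K ^ (-α) / α * t * exp (-(2 * m) * ρ) :=
          by linear_combination mul_le_mul_of_nonneg_left hsplit (exp_pos (m * t)).le +
            mul_le_mul_of_nonneg_left hΦup hc3.le + htail
      _ ≤ (c3 * A7 * t + exp m * c6 * Cη * K ^ (-α) / α * t) * exp (-min A8 (2 * m) * ρ) :=
          add_mul_exp_neg_mul_le (by positivity) (by positivity) (by positivity)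
      _ = _ := by ring

/-- regime `t ∈ (0,1)`, `1 ≤ r ≤ L^M` of the estimates following
Theorem 4.1: the reflected relativistic kernel satisfies the same two-sided
bound `t e^{-c r^{d_w/d_J}}` as the free relativistic kernel, with constants
independent of `M`, for all `M` larger than some `M₀`. -/
theorem stmt13 (α m K d dw dJ L c1 c2 c3 c4 c6 Cη A5 A6 A7 A8 : ℝ)
    (hα0 : 0 < α) (hα1 : α < 1) (hm : 0 < m)
    (hK : K = 2 * m ^ (1 - 1 / α))
    (hd : 0 < d) (hdw : 0 < dw) (hdJ : 1 < dJ) (hL : 1 < L)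
    (hc1 : 0 < c1) (hc2 : 0 < c2) (hc3 : 0 < c3) (hc4 : 0 < c4) (hc6 : 0 < c6)
    (hCη : 0 < Cη) (hA5 : 0 < A5) (hA6 : 0 < A6) (hA7 : 0 < A7) (hA8 : 0 < A8) :
    ∃ M0 : ℕ, ∃ C7 C8 C9 C10 : ℝ, 0 < C7 ∧ 0 < C8 ∧ 0 < C9 ∧ 0 < C10 ∧
      ∀ M : ℕ, M0 ≤ M →
      ∀ t : ℝ, 0 < t → t < 1 →
      ∀ r : ℝ, 1 ≤ r → r ≤ L ^ (M : ℝ) →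
      ∀ η G : ℝ → ℝ, Measurable η → Measurable G →
        (∀ u, 0 < u → 0 ≤ η u) → (∀ s, 0 < s → 0 ≤ G s) →
        (∀ u, 0 < u → η u ≤ Cη * t * u ^ (-1 - α)) →
        (∀ s, 0 < s → c1 * fprof d dw dJ c2 s r ≤ G s) →
        (∀ s, 0 < s → s < K * L ^ ((M : ℝ) * dw) → G s ≤ c3 * fprof d dw dJ c4 s r) →
        (∀ s, K * L ^ ((M : ℝ) * dw) ≤ s → G s ≤ c6 * L ^ (-((M : ℝ) * d))) →
        (A5 * t * Real.exp (-A6 * r ^ (dw / dJ)) ≤ Phi d dw dJ α m η c2 t r) →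
        (Phi d dw dJ α m η c4 t r ≤ A7 * t * Real.exp (-A8 * r ^ (dw / dJ))) →
        C7 * t * Real.exp (-C8 * r ^ (dw / dJ)) ≤
            Real.exp (m * t) *
              (∫ s in Ioi (0 : ℝ), G s * Real.exp (-(m ^ (1 / α)) * s) * η s) ∧
          Real.exp (m * t) *
              (∫ s in Ioi (0 : ℝ), G s * Real.exp (-(m ^ (1 / α)) * s) * η s) ≤
            C9 * t * Real.exp (-C10 * r ^ (dw / dJ)) :=
  stmt13_general α m K d dw dJ L c1 c2 c3 c4 c6 Cη A5 A6 A7 A8 hα0 hm hK hd hdw hdJ hL hc1 hc3 hc4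
    hc6 hCη hA5 hA6 hA7 hA8
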